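/- arXiv:math/0504002 — 3 statements merged into one kernel-verified Lean document; each statement's English description precedes it below -/
import Mathlib

section
/- Let β > 0, γ > 0, α ≥ 0, T > 0, z ≥ 0, and define H(p) = p(αγ + β ln p) for p ≥ 1 and H(p) = γα for p < 1. Then the function φ(t) = exp(γα(e^{β(T−t)} − 1)/β)·exp(z·γ·e^{β(T−t)}) satisfies the integral equation φ(t) = e^{γz} + ∫_t^T H(φ(s)) ds for all t ∈ [0,T]. -/
open Real

/-!
Writing `φ = exp u`, the exponent is `u = c·e^{β(T-s)} - a/β` with `a = γα`, `c = γα/β + zγ`,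
so `u' = -(a + β u)` and `φ` solves the Gompertz equation `φ' = -φ (a + β log φ)`.
Since `u ≥ u(T) = γz ≥ 0` for `s ≤ T`, `φ ≥ 1` there and `H(φ) = -φ'`; the fundamental
theorem of calculus and `φ(T) = e^{γz}` give the integral equation.
-/

noncomputable def gompertz (a β c T s : ℝ) : ℝ :=
  exp (c * exp (β * (T - s)) - a / β)

section Gompertz

variable {a β c T : ℝ}

theorem hasDerivAt_gompertz (hβ : β ≠ 0) (s : ℝ) :
    HasDerivAt (gompertz a β c T)
      (-(gompertz a β c T s * (a + β * log (gompertz a β c T s)))) s := by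
  have hinner : HasDerivAt (fun s => β * (T - s)) (-β) s := by
    simpa using ((hasDerivAt_id s).const_sub T).const_mul β
  refine ((hinner.exp.const_mul c).sub_const (a / β)).exp.congr_deriv ?_
  simp only [gompertz, log_exp]
  field_simp
  ring

theorem continuous_gompertz : Continuous (gompertz a β c T) := by
  unfold gompertz
  fun_prop

theorem integral_gompertz (hβ : β ≠ 0) (t t' : ℝ) :
    ∫ s in t..t', gompertz a β c T s * (a + β * log (gompertz a β c T s)) =
      gompertz a β c T t - gompertz a β c T t' := by
  have hcont : Continuous fun s =>
      gompertz a β c T s * (a + β * log (gompertz a β c T s)) :=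
    continuous_gompertz.mul <| continuous_const.add <| continuous_const.mul <|
      continuous_gompertz.log fun s => (exp_pos _).ne'
  rw [← neg_sub, ← intervalIntegral.integral_eq_sub_of_hasDerivAt
    (fun s _ => hasDerivAt_gompertz hβ s) (hcont.neg.intervalIntegrable t t'),
    intervalIntegral.integral_neg, neg_neg]

theorem gompertz_self : gompertz a β c T T = exp (c - a / β) := by
  simp [gompertz]

theorem one_le_gompertz (hβ : 0 ≤ β) (hc : 0 ≤ c) (hac : a / β ≤ c) {s : ℝ} (hs : s ≤ T) :
    1 ≤ gompertz a β c T s := by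
  have hE : 1 ≤ exp (β * (T - s)) := one_le_exp (mul_nonneg hβ (sub_nonneg.mpr hs))
  refine one_le_exp ?_
  nlinarith

end Gompertz

theorem phi_solves_ode_general (α β γ T z : ℝ) (hβ : 0 < β) (hγ : 0 < γ) (hα : 0 ≤ α)
    (hz : 0 ≤ z)
    (H : ℝ → ℝ)
    (hH : ∀ p, H p = if 1 ≤ p then p * (α * γ + β * Real.log p) else γ * α)
    (φ : ℝ → ℝ)
    (hφ : ∀ t, φ t =
      Real.exp (γ * α * (Real.exp (β * (T - t)) - 1) / β) *
        Real.exp (z * γ * Real.exp (β * (T - t)))) :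
    ∀ t ∈ Set.Icc (0 : ℝ) T, φ t = Real.exp (γ * z) + ∫ s in t..T, H (φ s) := by
  rintro t ⟨-, htT⟩
  have hφ_eq : φ = gompertz (γ * α) β (γ * α / β + z * γ) T := by
    funext s
    rw [hφ, ← exp_add, gompertz]
    congr 1
    ring
  have hc : γ * α / β ≤ γ * α / β + z * γ := le_add_of_nonneg_right (by positivity)
  have hHφ : ∀ s ∈ Set.uIcc t T, H (φ s) = φ s * (γ * α + β * log (φ s)) := by
    intro s hs
    have hsT : s ≤ T := (Set.uIcc_of_le htT ▸ hs).2
    rw [hH, if_pos (hφ_eq ▸ one_le_gompertz hβ.le (hc.trans' (by positivity)) hc hsT)]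
    ring
  rw [intervalIntegral.integral_congr hHφ, hφ_eq, integral_gompertz hβ.ne', gompertz_self]
  ring_nf

theorem phi_solves_ode (α β γ T z : ℝ) (hβ : 0 < β) (hγ : 0 < γ) (hα : 0 ≤ α)
    (hT : 0 < T) (hz : 0 ≤ z)
    (H : ℝ → ℝ)
    (hH : ∀ p, H p = if 1 ≤ p then p * (α * γ + β * Real.log p) else γ * α)
    (φ : ℝ → ℝ)
    (hφ : ∀ t, φ t =
      Real.exp (γ * α * (Real.exp (β * (T - t)) - 1) / β) *
        Real.exp (z * γ * Real.exp (β * (T - t)))) :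
    ∀ t ∈ Set.Icc (0 : ℝ) T, φ t = Real.exp (γ * z) + ∫ s in t..T, H (φ s) :=
  phi_solves_ode_general α β γ T z hβ hγ hα hz H hH φ hφ
end

section
/- Let f : [0,T] × ℝ × ℝ^d → ℝ satisfy |f(t,y,z)| ≤ α + β|y| + (γ/2)|z|² with γ > 0 and α ≥ β/γ. Define F(s,p,q) = 1_{p>0}·(γp·f(s, (ln p)/γ, q/(γp)) − |q|²/(2p)). Then for all s ∈ [0,T], p ∈ ℝ, q ∈ ℝ^d, F(s,p,q) ≤ H(p), where H(p) = p(αγ + β ln p) for p ≥ 1 and H(p) = γα for p < 1. -/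
open Real

theorem F_le_H {d : ℕ} (α β γ T : ℝ) (hα : 0 ≤ α) (hβ : 0 ≤ β) (hγ : 0 < γ)
    (hαβγ : β / γ ≤ α) (hT : 0 < T)
    (f : ℝ → ℝ → EuclideanSpace ℝ (Fin d) → ℝ)
    (hf : ∀ t y z, |f t y z| ≤ α + β * |y| + γ / 2 * ‖z‖ ^ 2) :
    ∀ s ∈ Set.Icc (0 : ℝ) T, ∀ (p : ℝ) (q : EuclideanSpace ℝ (Fin d)),
      (if 0 < p then
        γ * p * f s (Real.log p / γ) ((γ * p)⁻¹ • q) - ‖q‖ ^ 2 / (2 * p)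
       else 0) ≤
      (if 1 ≤ p then p * (α * γ + β * Real.log p) else γ * α) := by
  intro s hs p q
  by_cases hp : 0 < p
  · rw [if_pos hp]
    have hγp : 0 < γ * p := by positivity
    have hβγα : β ≤ γ * α := by
      rw [div_le_iff₀ hγ] at hαβγ; linarith [hαβγ]
    have hnorm : ‖(γ * p)⁻¹ • q‖ ^ 2 = (γ * p)⁻¹ ^ 2 * ‖q‖ ^ 2 := by
      rw [norm_smul, mul_pow, Real.norm_eq_abs, sq_abs]
    have h1 : f s (Real.log p / γ) ((γ * p)⁻¹ • q)
        ≤ α + β * |Real.log p / γ| + γ / 2 * ((γ * p)⁻¹ ^ 2 * ‖q‖ ^ 2) := by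
      rw [← hnorm]
      exact le_of_abs_le (hf s (Real.log p / γ) ((γ * p)⁻¹ • q))
    have habs : |Real.log p / γ| = |Real.log p| / γ := by
      rw [abs_div, abs_of_pos hγ]
    have key : γ * p * f s (Real.log p / γ) ((γ * p)⁻¹ • q) - ‖q‖ ^ 2 / (2 * p)
        ≤ γ * p * α + β * p * |Real.log p| := by
      have h2 := mul_le_mul_of_nonneg_left h1 hγp.le
      have heq : γ * p * (α + β * |Real.log p / γ| + γ / 2 * ((γ * p)⁻¹ ^ 2 * ‖q‖ ^ 2))
          = γ * p * α + β * p * |Real.log p| + ‖q‖ ^ 2 / (2 * p) := by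
        rw [habs]
        field_simp
      linarith [h2, heq.le]
    by_cases hp1 : 1 ≤ p
    · rw [if_pos hp1]
      have : |Real.log p| = Real.log p := abs_of_nonneg (Real.log_nonneg hp1)
      rw [this] at key
      nlinarith [key]
    · rw [if_neg hp1]
      push_neg at hp1
      have hlogle : Real.log p ≤ 0 := Real.log_nonpos hp.le hp1.le
      have : |Real.log p| = -Real.log p := abs_of_nonpos hlogle
      rw [this] at key
      -- -p log p ≤ 1 - p
      have hinv : Real.log p⁻¹ ≤ p⁻¹ - 1 := Real.log_le_sub_one_of_pos (inv_pos.mpr hp)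
      rw [Real.log_inv] at hinv
      have h3 : -(p * Real.log p) ≤ 1 - p := by
        have := mul_le_mul_of_nonneg_left hinv hp.le
        rw [mul_sub, mul_inv_cancel₀ hp.ne'] at this
        nlinarith [this]
      have h4 : β * -(p * Real.log p) ≤ β * (1 - p) :=
        mul_le_mul_of_nonneg_left h3 hβ
      have h5 : β * (1 - p) ≤ γ * α * (1 - p) :=
        mul_le_mul_of_nonneg_right hβγα (by linarith)
      nlinarith [key, h4, h5]
  · rw [if_neg hp]
    push_neg at hp
    rw [if_neg (by linarith : ¬ (1:ℝ) ≤ p)]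
    positivity
end

section
/- Let h : [0,∞) → [0,∞) be a nondecreasing convex C¹ function with h(0) > 0, γ > 0 and c := sup_{p ∈ (0,1)} γ·p·h(−ln(p)/γ) < ∞ (equivalently sup_{y>0} e^{−γy} h(y) < ∞). Define p₀ = inf{ p ≥ 1 : γ·p·h(ln(p)/γ) ≥ c } and H(p) = γ·p·h(ln(p)/γ) for p ≥ p₀ and H(p) = c for p < p₀. Then H is convex on ℝ. -/
/-!
Write `g p = γ p h(log p / γ)`. On `[1, ∞)` the function `g` is continuous, nondecreasing and
convex, since `g'(p) = γ h(y) + h'(y)` with `y = log p / γ` is nondecreasing in `p`. Moreover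
`g 1 = γ h(0) ≤ c`, so by the intermediate value theorem `g p₀ = c`. Hence `H p = g (max p p₀)`,
the composition of a convex nondecreasing function with a convex one.
-/

open Real Set Filter Topology

theorem ConvexOn.ite_le_apply_of_monotoneOn {𝕜 : Type*} [Field 𝕜] [LinearOrder 𝕜]
    [IsStrictOrderedRing 𝕜] {g : 𝕜 → 𝕜} {a : 𝕜} (hconv : ConvexOn 𝕜 (Ici a) g)
    (hmono : MonotoneOn g (Ici a)) :
    ConvexOn 𝕜 univ (fun p => if a ≤ p then g p else g a) := by
  have himage : (fun p => max p a) '' univ = Ici a := by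
    ext q
    simp only [image_univ, mem_range, mem_Ici]
    exact ⟨fun ⟨p, hp⟩ => hp ▸ le_max_right p a, fun hq => ⟨q, max_eq_left hq⟩⟩
  have hmax : ConvexOn 𝕜 univ (fun p => max p a) :=
    (convexOn_id convex_univ).sup (convexOn_const a convex_univ)
  convert (himage ▸ hconv).comp hmax (himage ▸ hmono) using 1
  ext p
  by_cases hp : a ≤ p
  · simp [hp]
  · simp [hp, max_eq_right (le_of_not_ge hp)]

theorem ContinuousOn.apply_sInf_setOf_le_eq {f : ℝ → ℝ} {a c : ℝ} (hf : ContinuousOn f (Ici a))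
    (ha : f a ≤ c) (hreach : ∃ p, a ≤ p ∧ c ≤ f p) :
    f (sInf {p | a ≤ p ∧ c ≤ f p}) = c := by
  set S := {p | a ≤ p ∧ c ≤ f p}
  have hbdd : BddBelow S := ⟨a, fun p hp => hp.1⟩
  have hclosed : IsClosed S := hf.preimage_isClosed_of_isClosed isClosed_Ici isClosed_Ici
  obtain ⟨haS, hcS⟩ := hclosed.csInf_mem hreach hbdd
  obtain ⟨q, ⟨haq, hqS⟩, hfq⟩ :=
    intermediate_value_Icc haS (hf.mono Icc_subset_Ici_self) ⟨ha, hcS⟩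
  have hSq : sInf S ≤ q := csInf_le hbdd ⟨haq, hfq.ge⟩
  rwa [le_antisymm hqS hSq] at hfq

/-- In the variable `y = log p / γ` this is `γ e^{γ y} h(y)`. -/
noncomputable def logRescale (h : ℝ → ℝ) (γ p : ℝ) : ℝ := γ * p * h (log p / γ)

section logRescale

variable {h : ℝ → ℝ} {γ : ℝ}

theorem logRescale_one : logRescale h γ 1 = γ * h 0 := by
  simp [logRescale]

theorem log_div_nonneg {p : ℝ} (hγ : 0 ≤ γ) (hp : 1 ≤ p) : 0 ≤ log p / γ :=
  div_nonneg (log_nonneg hp) hγ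

theorem continuousOn_logRescale (hγ : 0 ≤ γ) (hh : ContinuousOn h (Ici 0)) :
    ContinuousOn (logRescale h γ) (Ici 1) := by
  have hlog : ContinuousOn (fun p => log p / γ) (Ici 1) :=
    (continuousOn_log.mono fun p (hp : 1 ≤ p) => by
      simpa using (zero_lt_one.trans_le hp).ne').div_const γ
  exact (continuousOn_const.mul continuousOn_id).mul
    (hh.comp hlog fun p hp => log_div_nonneg hγ hp)

theorem monotoneOn_logRescale (hγ : 0 ≤ γ) (hmono : MonotoneOn h (Ici 0))
    (hnonneg : ∀ y ∈ Ici (0 : ℝ), 0 ≤ h y) :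
    MonotoneOn (logRescale h γ) (Ici 1) := by
  intro p (hp : 1 ≤ p) q (hq : 1 ≤ q) hpq
  have hlog : log p / γ ≤ log q / γ := by gcongr
  exact mul_le_mul (by gcongr) (hmono (log_div_nonneg hγ hp) (log_div_nonneg hγ hq) hlog)
    (hnonneg _ (log_div_nonneg hγ hp)) (by positivity)

theorem hasDerivAt_logRescale (hγ : γ ≠ 0) {p : ℝ} (hp : 0 < p)
    (hd : DifferentiableAt ℝ h (log p / γ)) :
    HasDerivAt (logRescale h γ) (γ * h (log p / γ) + deriv h (log p / γ)) p := by
  have hinner : HasDerivAt (fun q => log q / γ) (p⁻¹ / γ) p :=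
    (hasDerivAt_log hp.ne').div_const γ
  have hlin : HasDerivAt (fun q => γ * q) γ p := by
    simpa using (hasDerivAt_id p).const_mul γ
  refine (hlin.mul (hd.hasDerivAt.comp p hinner)).congr_deriv ?_
  simp only [Function.comp_apply]
  field_simp

theorem convexOn_logRescale (hγ : 0 < γ) (hmono : MonotoneOn h (Ici 0))
    (hconv : ConvexOn ℝ (Ici 0) h) (hsmooth : ContDiffOn ℝ 1 h (Ici 0)) :
    ConvexOn ℝ (Ici 1) (logRescale h γ) := by
  have hd : ∀ y ∈ Ioi (0 : ℝ), DifferentiableAt ℝ h y := fun y hy =>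
    (hsmooth.contDiffAt (Ici_mem_nhds hy)).differentiableAt one_ne_zero
  have hderiv : ∀ p ∈ Ioi (1 : ℝ), HasDerivAt (logRescale h γ)
      (γ * h (log p / γ) + deriv h (log p / γ)) p := fun p (hp : 1 < p) =>
    hasDerivAt_logRescale hγ.ne' (zero_lt_one.trans hp) (hd _ (div_pos (log_pos hp) hγ))
  have hderiv_mono : MonotoneOn (deriv h) (Ioi 0) :=
    (hconv.subset Ioi_subset_Ici_self (convex_Ioi 0)).monotoneOn_deriv hd
  refine MonotoneOn.convexOn_of_deriv (convex_Ici 1) (continuousOn_logRescale hγ.le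
    hsmooth.continuousOn) ?_ ?_ <;> rw [interior_Ici]
  · exact fun p hp => (hderiv p hp).differentiableAt.differentiableWithinAt
  · intro p (hp : 1 < p) q (hq : 1 < q) hpq
    have hyp : 0 < log p / γ := div_pos (log_pos hp) hγ
    have hyq : 0 < log q / γ := div_pos (log_pos hq) hγ
    have hlog : log p / γ ≤ log q / γ := by gcongr
    rw [(hderiv p hp).deriv, (hderiv q hq).deriv]
    exact add_le_add (mul_le_mul_of_nonneg_left (hmono hyp.le hyq.le hlog) hγ.le)
      (hderiv_mono hyp hyq hlog)

theorem exists_le_logRescale (hγ : 0 < γ) (hmono : MonotoneOn h (Ici 0)) (h0 : 0 < h 0)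
    (c : ℝ) : ∃ p, 1 ≤ p ∧ c ≤ logRescale h γ p := by
  set p := max 1 (c / (γ * h 0))
  have hp : 1 ≤ p := le_max_left _ _
  refine ⟨p, hp, ?_⟩
  calc c = c / (γ * h 0) * (γ * h 0) := by field_simp
    _ ≤ p * (γ * h 0) := by gcongr; exact le_max_right _ _
    _ ≤ γ * p * h (log p / γ) := by
      rw [mul_left_comm, ← mul_assoc]
      gcongr
      exact hmono self_mem_Ici (log_div_nonneg hγ.le hp) (log_div_nonneg hγ.le hp)

theorem bddAbove_setOf_mul_neg_log_div (hγ : 0 < γ)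
    (hbdd : ∃ C : ℝ, ∀ y > (0 : ℝ), exp (-γ * y) * h y ≤ C) :
    BddAbove {x : ℝ | ∃ p ∈ Ioo (0 : ℝ) 1, x = γ * p * h (-log p / γ)} := by
  obtain ⟨C, hC⟩ := hbdd
  refine ⟨γ * C, ?_⟩
  rintro x ⟨p, ⟨hp0, hp1⟩, rfl⟩
  have hexp : exp (-γ * (-log p / γ)) = p := by
    rw [show -γ * (-log p / γ) = log p by field_simp, exp_log hp0]
  have := hC _ (div_pos (neg_pos.mpr (log_neg hp0 hp1)) hγ)
  rw [hexp] at this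
  rw [mul_assoc]
  gcongr

/-- As `p → 1⁻` the values `γ p h(-log p / γ) ≥ γ p h(0)` approach `γ h(0)`. -/
theorem mul_le_sSup_setOf_mul_neg_log_div (hγ : 0 < γ) (hmono : MonotoneOn h (Ici 0))
    (hbdd : BddAbove {x : ℝ | ∃ p ∈ Ioo (0 : ℝ) 1, x = γ * p * h (-log p / γ)}) :
    γ * h 0 ≤ sSup {x : ℝ | ∃ p ∈ Ioo (0 : ℝ) 1, x = γ * p * h (-log p / γ)} := by
  have hlim : Tendsto (fun p => γ * p * h 0) (𝓝[<] 1) (𝓝 (γ * h 0)) := by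
    have hcont : Continuous fun p : ℝ => γ * p * h 0 := by fun_prop
    simpa using (hcont.tendsto 1).mono_left nhdsWithin_le_nhds
  refine le_of_tendsto hlim ?_
  filter_upwards [Ioo_mem_nhdsLT one_pos] with p hp
  have hy : 0 ≤ -log p / γ := (div_pos (neg_pos.mpr (log_neg hp.1 hp.2)) hγ).le
  calc γ * p * h 0 ≤ γ * p * h (-log p / γ) := by
        gcongr
        · exact mul_nonneg hγ.le hp.1.le
        · exact hmono self_mem_Ici hy hy
    _ ≤ _ := le_csSup hbdd ⟨p, hp, rfl⟩

end logRescale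

theorem H_convex_superlinear_general (h : ℝ → ℝ) (γ : ℝ) (hγ : 0 < γ)
    (hmono : MonotoneOn h (Ici 0)) (hconv : ConvexOn ℝ (Ici 0) h)
    (hsmooth : ContDiffOn ℝ 1 h (Ici 0)) (h0 : 0 < h 0)
    (hnonneg : ∀ y ∈ Ici (0 : ℝ), 0 ≤ h y)
    (hbdd : ∃ C : ℝ, ∀ y > (0 : ℝ), Real.exp (-γ * y) * h y ≤ C)
    (c : ℝ) (hc : c = sSup {x : ℝ | ∃ p ∈ Ioo (0 : ℝ) 1, x = γ * p * h (-Real.log p / γ)})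
    (p₀ : ℝ) (hp₀ : p₀ = sInf {p : ℝ | 1 ≤ p ∧ c ≤ γ * p * h (Real.log p / γ)}) :
    ConvexOn ℝ Set.univ
      (fun p : ℝ => if p₀ ≤ p then γ * p * h (Real.log p / γ) else c) := by
  have hc1 : logRescale h γ 1 ≤ c := by
    rw [logRescale_one, hc]
    exact mul_le_sSup_setOf_mul_neg_log_div hγ hmono (bddAbove_setOf_mul_neg_log_div hγ hbdd)
  have hreach := exists_le_logRescale hγ hmono h0 c
  have hp₀1 : 1 ≤ p₀ := hp₀ ▸ le_csInf (hreach.imp fun _ hp => hp) fun _ hp => hp.1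
  have hcp₀ : logRescale h γ p₀ = c :=
    hp₀ ▸ (continuousOn_logRescale hγ.le hsmooth.continuousOn).apply_sInf_setOf_le_eq hc1 hreach
  have hglue := ConvexOn.ite_le_apply_of_monotoneOn
    ((convexOn_logRescale hγ hmono hconv hsmooth).subset (Ici_subset_Ici.2 hp₀1) (convex_Ici _))
    ((monotoneOn_logRescale hγ.le hmono hnonneg).mono (Ici_subset_Ici.2 hp₀1))
  rwa [hcp₀] at hglue

theorem H_convex_superlinear (h : ℝ → ℝ) (γ : ℝ) (hγ : 0 < γ)
    (hmono : MonotoneOn h (Ici 0)) (hconv : ConvexOn ℝ (Ici 0) h)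
    (hsmooth : ContDiffOn ℝ 1 h (Ici 0)) (h0 : 0 < h 0)
    (hnonneg : ∀ y ∈ Ici (0 : ℝ), 0 ≤ h y)
    (hnotconst : ¬ ∀ y ∈ Ici (0 : ℝ), h y = h 0)
    (hbdd : ∃ C : ℝ, ∀ y > (0 : ℝ), Real.exp (-γ * y) * h y ≤ C)
    (c : ℝ) (hc : c = sSup {x : ℝ | ∃ p ∈ Ioo (0 : ℝ) 1, x = γ * p * h (-Real.log p / γ)})
    (p₀ : ℝ) (hp₀ : p₀ = sInf {p : ℝ | 1 ≤ p ∧ c ≤ γ * p * h (Real.log p / γ)}) :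
    ConvexOn ℝ Set.univ
      (fun p : ℝ => if p₀ ≤ p then γ * p * h (Real.log p / γ) else c) :=
  H_convex_superlinear_general h γ hγ hmono hconv hsmooth h0 hnonneg hbdd c hc p₀ hp₀
end
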